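/- arXiv:1410.0952 — 6 statements merged into one kernel-verified Lean document; each statement's English description precedes it below -/
import Mathlib

section
/- Let P0, P1 be probability distributions on a common measurable space and let π0, π1 ∈ [0,1] satisfy π0 + π1 < 1. Let P̃1 = (1−π1)P1 + π1P0. Then ν*(P0, P̃1) = ν*(P0, P1) / (1 − π1 + π1·ν*(P0, P1)). -/
open MeasureTheory

/-- Maximal mixture proportion `ν*(P,Q)`: the largest `α ∈ [0,1]` such that
`P = α Q + (1-α) S` for some probability distribution `S`. -/
noncomputable def nuStar {Ω : Type*} [MeasurableSpace Ω] (P Q : Measure Ω) : ℝ :=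
  sSup {α : ℝ | 0 ≤ α ∧ α ≤ 1 ∧ ∃ S : Measure Ω, IsProbabilityMeasure S ∧
    P = ENNReal.ofReal α • Q + ENNReal.ofReal (1 - α) • S}

section helpers

variable {Ω : Type*} [MeasurableSpace Ω]

lemma mix_apply_toReal (x y : ℝ) (hx : 0 ≤ x) (hy : 0 ≤ y)
    (Q S : Measure Ω) [IsFiniteMeasure Q] [IsFiniteMeasure S] (s : Set Ω) :
    ((ENNReal.ofReal x • Q + ENNReal.ofReal y • S) s).toReal
      = x * (Q s).toReal + y * (S s).toReal := by
  rw [Measure.coe_add, Pi.add_apply, Measure.smul_apply, Measure.smul_apply,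
    smul_eq_mul, smul_eq_mul,
    ENNReal.toReal_add (ENNReal.mul_ne_top ENNReal.ofReal_ne_top (measure_ne_top Q s))
      (ENNReal.mul_ne_top ENNReal.ofReal_ne_top (measure_ne_top S s)),
    ENNReal.toReal_mul, ENNReal.toReal_mul, ENNReal.toReal_ofReal hx, ENNReal.toReal_ofReal hy]

lemma eq_mix_iff (P Q S : Measure Ω) [IsFiniteMeasure P] [IsFiniteMeasure Q] [IsFiniteMeasure S]
    (x y : ℝ) (hx : 0 ≤ x) (hy : 0 ≤ y) :
    P = ENNReal.ofReal x • Q + ENNReal.ofReal y • S ↔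
      ∀ s : Set Ω, MeasurableSet s →
        (P s).toReal = x * (Q s).toReal + y * (S s).toReal := by
  constructor
  · intro h s _
    rw [h, mix_apply_toReal x y hx hy]
  · intro h
    ext s hs
    have h2 := h s hs
    rw [← mix_apply_toReal x y hx hy Q S s] at h2
    have hfin : (ENNReal.ofReal x • Q + ENNReal.ofReal y • S) s ≠ ⊤ := by
      rw [Measure.coe_add, Pi.add_apply, Measure.smul_apply, Measure.smul_apply,
        smul_eq_mul, smul_eq_mul]
      exact ENNReal.add_ne_top.mpr
        ⟨ENNReal.mul_ne_top ENNReal.ofReal_ne_top (measure_ne_top Q s),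
         ENNReal.mul_ne_top ENNReal.ofReal_ne_top (measure_ne_top S s)⟩
    exact (ENNReal.toReal_eq_toReal_iff' (measure_ne_top P s) hfin).mp h2

end helpers

theorem stmt_0 {Ω : Type*} [MeasurableSpace Ω] (P0 P1 : Measure Ω)
    [IsProbabilityMeasure P0] [IsProbabilityMeasure P1]
    (π0 π1 : ℝ) (hπ0 : π0 ∈ Set.Icc (0:ℝ) 1) (hπ1 : π1 ∈ Set.Icc (0:ℝ) 1)
    (hsum : π0 + π1 < 1)
    (Pt1 : Measure Ω)
    (hPt1 : Pt1 = ENNReal.ofReal (1 - π1) • P1 + ENNReal.ofReal π1 • P0) :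
    nuStar P0 Pt1 = nuStar P0 P1 / (1 - π1 + π1 * nuStar P0 P1) := by
  obtain ⟨hπ0a, hπ0b⟩ := hπ0
  obtain ⟨hπ1a, hπ1b⟩ := hπ1
  have hπ1lt : π1 < 1 := by linarith
  have hc : (0:ℝ) < 1 - π1 := by linarith
  haveI hPt1prob : IsProbabilityMeasure Pt1 := by
    constructor
    rw [hPt1, Measure.coe_add, Pi.add_apply, Measure.smul_apply, Measure.smul_apply,
      smul_eq_mul, smul_eq_mul, measure_univ, measure_univ, mul_one, mul_one,
      ← ENNReal.ofReal_add (by linarith) hπ1a]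
    norm_num
  set A : Measure Ω → Set ℝ := fun Q => {α : ℝ | 0 ≤ α ∧ α ≤ 1 ∧ ∃ S : Measure Ω,
    IsProbabilityMeasure S ∧ P0 = ENNReal.ofReal α • Q + ENNReal.ofReal (1 - α) • S} with hA
  have hnu : ∀ Q : Measure Ω, nuStar P0 Q = sSup (A Q) := fun _ => rfl
  have hzero : ∀ Q : Measure Ω, (0:ℝ) ∈ A Q := by
    intro Q
    refine ⟨le_refl 0, zero_le_one, P0, inferInstance, ?_⟩
    simp
  have hbdd : ∀ Q : Measure Ω, BddAbove (A Q) := fun Q => ⟨1, fun a ha => ha.2.1⟩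
  have hne : ∀ Q : Measure Ω, (A Q).Nonempty := fun Q => ⟨0, hzero Q⟩
  -- monotonicity of the two transfer maps
  have hf_mono : ∀ a b : ℝ, 0 ≤ a → a ≤ b →
      a / (1 - π1 + π1 * a) ≤ b / (1 - π1 + π1 * b) := by
    intro a b ha hab
    have hda : 0 < 1 - π1 + π1 * a := by nlinarith
    have hdb : 0 < 1 - π1 + π1 * b := by nlinarith
    rw [div_le_div_iff₀ hda hdb]
    nlinarith
  have hg_mono : ∀ a b : ℝ, 0 ≤ a → a ≤ b → b ≤ 1 →
      (1 - π1) * a / (1 - π1 * a) ≤ (1 - π1) * b / (1 - π1 * b) := by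
    intro a b ha hab hb1
    have hda : 0 < 1 - π1 * a := by nlinarith
    have hdb : 0 < 1 - π1 * b := by nlinarith
    rw [div_le_div_iff₀ hda hdb]
    nlinarith
  have hfg : ∀ b : ℝ, 0 ≤ b → b ≤ 1 →
      ((1 - π1) * b / (1 - π1 * b)) / (1 - π1 + π1 * ((1 - π1) * b / (1 - π1 * b))) = b := by
    intro b hb0 hb1
    have hd : (0:ℝ) < 1 - π1 * b := by nlinarith
    have hd2 : 1 - π1 * b ≠ 0 := ne_of_gt hd
    field_simp
    ring
  -- transfer (i) : A P1 → A Pt1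
  have trans₁ : ∀ α ∈ A P1, α / (1 - π1 + π1 * α) ∈ A Pt1 := by
    rintro α ⟨hα0, hα1, S, hS, hdec⟩
    haveI := hS
    have hden : (0:ℝ) < 1 - π1 + π1 * α := by nlinarith
    have hβ0 : 0 ≤ α / (1 - π1 + π1 * α) := by positivity
    have hβ1 : α / (1 - π1 + π1 * α) ≤ 1 := by
      rw [div_le_one hden]; nlinarith
    refine ⟨hβ0, hβ1, S, hS, ?_⟩
    set β := α / (1 - π1 + π1 * α) with hβdef
    have hβ : β * (1 - π1 + π1 * α) = α := by
      rw [hβdef]; field_simp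
    rw [eq_mix_iff P0 Pt1 S β (1 - β) hβ0 (by linarith)]
    intro s hs
    have h1 := (eq_mix_iff P0 P1 S α (1 - α) hα0 (by linarith)).mp hdec s hs
    have h2 : (Pt1 s).toReal = (1 - π1) * (P1 s).toReal + π1 * (P0 s).toReal := by
      rw [hPt1]; exact mix_apply_toReal _ _ (by linarith) hπ1a P1 P0 s
    rw [h2]
    linear_combination (1 - β * π1) * h1 + ((S s).toReal - (P1 s).toReal) * hβ
  -- transfer (ii) : A Pt1 → A P1
  have trans₂ : ∀ β ∈ A Pt1, (1 - π1) * β / (1 - π1 * β) ∈ A P1 := by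
    rintro β ⟨hβ0, hβ1, S, hS, hdec⟩
    haveI := hS
    have hd : (0:ℝ) < 1 - π1 * β := by nlinarith
    have hα0 : 0 ≤ (1 - π1) * β / (1 - π1 * β) := by positivity
    have hα1 : (1 - π1) * β / (1 - π1 * β) ≤ 1 := by
      rw [div_le_one hd]; nlinarith
    refine ⟨hα0, hα1, S, hS, ?_⟩
    set α := (1 - π1) * β / (1 - π1 * β) with hαdef
    have hα : α * (1 - π1 * β) = (1 - π1) * β := by
      rw [hαdef]; field_simp
    rw [eq_mix_iff P0 P1 S α (1 - α) hα0 (by linarith)]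
    intro s hs
    have h1 := (eq_mix_iff P0 Pt1 S β (1 - β) hβ0 (by linarith)).mp hdec s hs
    have h2 : (Pt1 s).toReal = (1 - π1) * (P1 s).toReal + π1 * (P0 s).toReal := by
      rw [hPt1]; exact mix_apply_toReal _ _ (by linarith) hπ1a P1 P0 s
    rw [h2] at h1
    have key : (1 - π1 * β) * (P0 s).toReal
        = (1 - π1 * β) * (α * (P1 s).toReal + (1 - α) * (S s).toReal) := by
      linear_combination h1 + ((S s).toReal - (P1 s).toReal) * hα
    exact mul_left_cancel₀ (ne_of_gt hd) key
  -- bounds on the sups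
  have hν0 : 0 ≤ nuStar P0 P1 := by rw [hnu]; exact le_csSup (hbdd P1) (hzero P1)
  have hν1 : nuStar P0 P1 ≤ 1 := by
    rw [hnu]; exact csSup_le (hne P1) fun a ha => ha.2.1
  have hνt0 : 0 ≤ nuStar P0 Pt1 := by rw [hnu]; exact le_csSup (hbdd Pt1) (hzero Pt1)
  have hνt1 : nuStar P0 Pt1 ≤ 1 := by
    rw [hnu]; exact csSup_le (hne Pt1) fun a ha => ha.2.1
  apply le_antisymm
  · -- νt ≤ f ν
    rw [hnu Pt1]
    apply csSup_le (hne Pt1)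
    intro b hb
    have hb0 : 0 ≤ b := hb.1
    have hb1 : b ≤ 1 := hb.2.1
    have hgb : (1 - π1) * b / (1 - π1 * b) ∈ A P1 := trans₂ b hb
    have hle : (1 - π1) * b / (1 - π1 * b) ≤ nuStar P0 P1 := by
      rw [hnu]; exact le_csSup (hbdd P1) hgb
    have hgb0 : 0 ≤ (1 - π1) * b / (1 - π1 * b) := by
      have hd : (0:ℝ) < 1 - π1 * b := by nlinarith
      positivity
    calc b = ((1 - π1) * b / (1 - π1 * b)) / (1 - π1 + π1 * ((1 - π1) * b / (1 - π1 * b))) :=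
          (hfg b hb0 hb1).symm
      _ ≤ nuStar P0 P1 / (1 - π1 + π1 * nuStar P0 P1) := hf_mono _ _ hgb0 hle
  · -- f ν ≤ νt
    have hν_le : nuStar P0 P1 ≤ (1 - π1) * nuStar P0 Pt1 / (1 - π1 * nuStar P0 Pt1) := by
      rw [hnu P1]
      apply csSup_le (hne P1)
      intro a ha
      have hfa : a / (1 - π1 + π1 * a) ∈ A Pt1 := trans₁ a ha
      have hfa0 : 0 ≤ a / (1 - π1 + π1 * a) := hfa.1
      have hle : a / (1 - π1 + π1 * a) ≤ nuStar P0 Pt1 := by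
        rw [hnu]; exact le_csSup (hbdd Pt1) hfa
      have hgf : (1 - π1) * (a / (1 - π1 + π1 * a)) / (1 - π1 * (a / (1 - π1 + π1 * a))) = a := by
        have hden : (0:ℝ) < 1 - π1 + π1 * a := by nlinarith [ha.1, ha.2.1]
        have hden' : 1 - π1 + π1 * a ≠ 0 := ne_of_gt hden
        rw [div_eq_iff]
        · field_simp
          ring
        · have : π1 * (a / (1 - π1 + π1 * a)) ≤ π1 * 1 := by
            have := hf_mono a 1 ha.1 ha.2.1
            have h1le : a / (1 - π1 + π1 * a) ≤ 1 := by
              rw [div_le_one hden]; nlinarith [ha.1, ha.2.1]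
            nlinarith [ha.1]
          nlinarith
      calc a = (1 - π1) * (a / (1 - π1 + π1 * a)) / (1 - π1 * (a / (1 - π1 + π1 * a))) := hgf.symm
        _ ≤ (1 - π1) * nuStar P0 Pt1 / (1 - π1 * nuStar P0 Pt1) :=
            hg_mono _ _ hfa0 hle hνt1
    calc nuStar P0 P1 / (1 - π1 + π1 * nuStar P0 P1)
        ≤ ((1 - π1) * nuStar P0 Pt1 / (1 - π1 * nuStar P0 Pt1))
          / (1 - π1 + π1 * ((1 - π1) * nuStar P0 Pt1 / (1 - π1 * nuStar P0 Pt1))) :=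
          hf_mono _ _ hν0 hν_le
      _ = nuStar P0 Pt1 := hfg _ hνt0 hνt1
end

section
/- Let P0, P1 be probability distributions on a common measurable space and let π0, π1 ∈ [0,1] satisfy π0 + π1 < 1. Let P̃0 = (1−π0)P0 + π0P1. Then ν*(P1, P̃0) = ν*(P1, P0) / (1 − π0 + π0·ν*(P1, P0)). -/
open MeasureTheory

/-- The set whose supremum is `nuStar`. -/
def mixSet {Ω : Type*} [MeasurableSpace Ω] (P Q : Measure Ω) : Set ℝ :=
  {α : ℝ | 0 ≤ α ∧ α ≤ 1 ∧ ∃ S : Measure Ω, IsProbabilityMeasure S ∧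
    P = ENNReal.ofReal α • Q + ENNReal.ofReal (1 - α) • S}

lemma nuStar_eq_sSup {Ω : Type*} [MeasurableSpace Ω] (P Q : Measure Ω) :
    nuStar P Q = sSup (mixSet P Q) := rfl

lemma combo {Ω : Type*} [MeasurableSpace Ω] (M : Measure Ω) {a b : ℝ}
    (ha : 0 ≤ a) (hb : 0 ≤ b) :
    ENNReal.ofReal a • M + ENNReal.ofReal b • M = ENNReal.ofReal (a + b) • M := by
  rw [ENNReal.ofReal_add ha hb, add_smul]

lemma smulmul {Ω : Type*} [MeasurableSpace Ω] (M : Measure Ω) {a b : ℝ}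
    (ha : 0 ≤ a) :
    ENNReal.ofReal a • ENNReal.ofReal b • M = ENNReal.ofReal (a * b) • M := by
  rw [smul_smul, ← ENNReal.ofReal_mul ha]

lemma mix_fwd {Ω : Type*} [MeasurableSpace Ω] (P0 P1 S Pt0 : Measure Ω)
    (π0 α β : ℝ) (hπ0 : 0 ≤ π0) (hα0 : 0 ≤ α)
    (hβ0 : 0 ≤ β) (hβ1 : β ≤ 1)
    (e1 : β = α * (1 - π0) + α * π0 * β)
    (e2 : 1 - β = α * π0 * (1 - β) + (1 - α))
    (hπ0' : π0 ≤ 1) (hα1 : α ≤ 1)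
    (hPt0 : Pt0 = ENNReal.ofReal (1 - π0) • P0 + ENNReal.ofReal π0 • P1)
    (hPS : P1 = ENNReal.ofReal β • P0 + ENNReal.ofReal (1 - β) • S) :
    P1 = ENNReal.ofReal α • Pt0 + ENNReal.ofReal (1 - α) • S := by
  have h1 : (0:ℝ) ≤ α * (1 - π0) := mul_nonneg hα0 (by linarith)
  have h2 : (0:ℝ) ≤ α * π0 := by positivity
  have E1 : ENNReal.ofReal β • P0
      = ENNReal.ofReal (α * (1 - π0)) • P0 + ENNReal.ofReal (α * π0 * β) • P0 := by
    rw [combo P0 h1 (by positivity), ← e1]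
  have E2 : ENNReal.ofReal (1 - β) • S
      = ENNReal.ofReal (α * π0 * (1 - β)) • S + ENNReal.ofReal (1 - α) • S := by
    rw [combo S (mul_nonneg h2 (by linarith)) (by linarith), ← e2]
  rw [hPt0, smul_add]
  conv_rhs => rw [hPS]
  rw [smulmul _ hα0, smulmul _ hα0, smul_add, smulmul _ h2, smulmul _ h2]
  conv_lhs => rw [hPS, E1, E2]
  abel

lemma mix_bwd {Ω : Type*} [MeasurableSpace Ω] (P0 P1 S Pt0 : Measure Ω)
    [IsProbabilityMeasure P1]
    (π0 α : ℝ) (hπ0 : 0 ≤ π0) (hπ0' : π0 < 1) (hα0 : 0 ≤ α) (hα1 : α ≤ 1)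
    (hPt0 : Pt0 = ENNReal.ofReal (1 - π0) • P0 + ENNReal.ofReal π0 • P1)
    (hPS : P1 = ENNReal.ofReal α • Pt0 + ENNReal.ofReal (1 - α) • S) :
    P1 = ENNReal.ofReal (α * (1 - π0) / (1 - α * π0)) • P0
        + ENNReal.ofReal (1 - α * (1 - π0) / (1 - α * π0)) • S := by
  have hd : 0 < 1 - α * π0 := by nlinarith
  have h2 : (0:ℝ) ≤ α * π0 := by positivity
  have h1 : (0:ℝ) ≤ α * (1 - π0) := mul_nonneg hα0 (by linarith)
  have big : P1 = ENNReal.ofReal (α * (1 - π0)) • P0 + ENNReal.ofReal (α * π0) • P1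
      + ENNReal.ofReal (1 - α) • S := by
    conv_lhs => rw [hPS, hPt0]
    rw [smul_add, smulmul _ hα0, smulmul _ hα0]
  have hsum : ENNReal.ofReal (1 - α * π0) • P1 + ENNReal.ofReal (α * π0) • P1 = P1 := by
    rw [combo P1 hd.le h2]
    norm_num
  have key : ENNReal.ofReal (1 - α * π0) • P1
      = ENNReal.ofReal (α * (1 - π0)) • P0 + ENNReal.ofReal (1 - α) • S := by
    have heq : ENNReal.ofReal (1 - α * π0) • P1 + ENNReal.ofReal (α * π0) • P1
        = (ENNReal.ofReal (α * (1 - π0)) • P0 + ENNReal.ofReal (1 - α) • S)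
          + ENNReal.ofReal (α * π0) • P1 := by
      rw [hsum]
      conv_lhs => rw [big]
      abel
    ext s hs
    have h := congrArg (fun μ : Measure Ω => μ s) heq
    simp only [Measure.add_apply, Measure.smul_apply, smul_eq_mul] at h ⊢
    have hfin : ENNReal.ofReal (α * π0) * P1 s ≠ ⊤ :=
      ENNReal.mul_ne_top ENNReal.ofReal_ne_top (measure_ne_top _ _)
    exact ENNReal.add_left_inj hfin |>.mp h
  have hinv : P1 = ENNReal.ofReal (1 / (1 - α * π0)) • ENNReal.ofReal (1 - α * π0) • P1 := by
    rw [smulmul _ (by positivity), one_div_mul_cancel hd.ne', ENNReal.ofReal_one, one_smul]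
  rw [hinv, key, smul_add, smulmul _ (by positivity), smulmul _ (by positivity)]
  congr 2
  · field_simp
  · congr 1
    field_simp
    ring

theorem stmt_1 {Ω : Type*} [MeasurableSpace Ω] (P0 P1 : Measure Ω)
    [IsProbabilityMeasure P0] [IsProbabilityMeasure P1]
    (π0 π1 : ℝ) (hπ0 : π0 ∈ Set.Icc (0:ℝ) 1) (hπ1 : π1 ∈ Set.Icc (0:ℝ) 1)
    (hsum : π0 + π1 < 1)
    (Pt0 : Measure Ω)
    (hPt0 : Pt0 = ENNReal.ofReal (1 - π0) • P0 + ENNReal.ofReal π0 • P1) :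
    nuStar P1 Pt0 = nuStar P1 P0 / (1 - π0 + π0 * nuStar P1 P0) := by
  obtain ⟨hπ0l, hπ0r⟩ := hπ0
  have hπ0lt : π0 < 1 := by linarith [hπ1.1]
  rw [nuStar_eq_sSup, nuStar_eq_sSup]
  have h0A : (0:ℝ) ∈ mixSet P1 P0 := ⟨le_refl _, zero_le_one, P1, inferInstance, by simp⟩
  have h0A' : (0:ℝ) ∈ mixSet P1 Pt0 := ⟨le_refl _, zero_le_one, P1, inferInstance, by simp⟩
  have hbddA : BddAbove (mixSet P1 P0) := ⟨1, fun x hx => hx.2.1⟩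
  have hbddA' : BddAbove (mixSet P1 Pt0) := ⟨1, fun x hx => hx.2.1⟩
  set ν := sSup (mixSet P1 P0) with hν
  set μ := sSup (mixSet P1 Pt0) with hμ
  have hν0 : 0 ≤ ν := le_csSup hbddA h0A
  have hν1 : ν ≤ 1 := csSup_le ⟨0, h0A⟩ (fun x hx => hx.2.1)
  have hμ0 : 0 ≤ μ := le_csSup hbddA' h0A'
  have hμ1 : μ ≤ 1 := csSup_le ⟨0, h0A'⟩ (fun x hx => hx.2.1)
  have hdenν : 0 < 1 - π0 + π0 * ν := by nlinarith
  -- forward: image of mixSet P1 P0 lands in mixSet P1 Pt0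
  have fwd : ∀ β ∈ mixSet P1 P0, β / (1 - π0 + π0 * β) ∈ mixSet P1 Pt0 := by
    rintro β ⟨hβ0, hβ1, S, hS, hPS⟩
    have hden : 0 < 1 - π0 + π0 * β := by nlinarith
    have hden' : (1 - π0 + π0 * β) ≠ 0 := hden.ne'
    have hα0 : 0 ≤ β / (1 - π0 + π0 * β) := div_nonneg hβ0 hden.le
    have hα1 : β / (1 - π0 + π0 * β) ≤ 1 := by rw [div_le_one hden]; nlinarith
    refine ⟨hα0, hα1, S, hS, ?_⟩
    refine mix_fwd P0 P1 S Pt0 π0 _ β hπ0l hα0 hβ0 hβ1 ?_ ?_ hπ0r hα1 hPt0 hPS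
    · linear_combination (-1:ℝ) * (div_mul_cancel₀ β hden')
    · linear_combination (div_mul_cancel₀ β hden')
  -- backward
  have bwd : ∀ α ∈ mixSet P1 Pt0, α * (1 - π0) / (1 - α * π0) ∈ mixSet P1 P0 := by
    rintro α ⟨hα0, hα1, S, hS, hPS⟩
    have hd : 0 < 1 - α * π0 := by nlinarith
    refine ⟨div_nonneg (mul_nonneg hα0 (by linarith)) hd.le, ?_, S, hS,
      mix_bwd P0 P1 S Pt0 π0 α hπ0l hπ0lt hα0 hα1 hPt0 hPS⟩
    rw [div_le_one hd]; nlinarith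
  -- μ ≤ ν / (1 - π0 + π0 * ν)
  have hle : μ ≤ ν / (1 - π0 + π0 * ν) := by
    apply csSup_le ⟨0, h0A'⟩
    intro α hα
    have hα0 : 0 ≤ α := hα.1
    have hα1 : α ≤ 1 := hα.2.1
    have hd : 0 < 1 - α * π0 := by nlinarith
    have hβν : α * (1 - π0) / (1 - α * π0) ≤ ν := le_csSup hbddA (bwd α hα)
    rw [div_le_iff₀ hd] at hβν
    rw [le_div_iff₀ hdenν]
    nlinarith
  have hge : ν / (1 - π0 + π0 * ν) ≤ μ := by
    have hμd : 0 < 1 - μ * π0 := by nlinarith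
    have hνle : ν ≤ μ * (1 - π0) / (1 - μ * π0) := by
      apply csSup_le ⟨0, h0A⟩
      intro β hβ
      have hβ0 : 0 ≤ β := hβ.1
      have hβ1 : β ≤ 1 := hβ.2.1
      have hden : 0 < 1 - π0 + π0 * β := by nlinarith
      have hgβ : β / (1 - π0 + π0 * β) ≤ μ := le_csSup hbddA' (fwd β hβ)
      rw [div_le_iff₀ hden] at hgβ
      rw [le_div_iff₀ hμd]
      nlinarith
    rw [div_le_iff₀ hdenν]
    rw [le_div_iff₀ hμd] at hνle
    nlinarith
  linarith
end

section
/- Let P0, P1 be probability distributions on a common measurable space and let π0, π1 ∈ [0,1] satisfy π0 + π1 < 1. Let P̃1 = (1−π1)P1 + π1P0. Then ν*(P0, P1) ≤ ν*(P0, P̃1) ≤ ν*(P0, P1)/(1 − π1). -/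
open MeasureTheory

lemma isProb_mix {Ω : Type*} [MeasurableSpace Ω] (Q S : Measure Ω)
    [IsProbabilityMeasure Q] [IsProbabilityMeasure S] (a b : ℝ)
    (ha : 0 ≤ a) (hb : 0 ≤ b) (hab : a + b = 1) :
    IsProbabilityMeasure (ENNReal.ofReal a • Q + ENNReal.ofReal b • S) := by
  constructor
  simp only [Measure.add_toOuterMeasure, Measure.smul_toOuterMeasure,
    Measure.coe_add, Measure.coe_smul, Pi.add_apply, Pi.smul_apply,
    smul_eq_mul, measure_univ, mul_one]
  rw [← ENNReal.ofReal_add ha hb, hab, ENNReal.ofReal_one]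

lemma mix_apply {Ω : Type*} [MeasurableSpace Ω] (Q S : Measure Ω) (a b : ℝ) (s : Set Ω) :
    (ENNReal.ofReal a • Q + ENNReal.ofReal b • S) s
      = ENNReal.ofReal a * Q s + ENNReal.ofReal b * S s := by
  simp [Measure.add_apply, Measure.smul_apply, smul_eq_mul]

lemma mix_iff {Ω : Type*} [MeasurableSpace Ω] (P Q S : Measure Ω)
    [IsFiniteMeasure P] [IsFiniteMeasure Q] [IsFiniteMeasure S]
    (a b : ℝ) (ha : 0 ≤ a) (hb : 0 ≤ b) :
    P = ENNReal.ofReal a • Q + ENNReal.ofReal b • S ↔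
      ∀ s : Set Ω, MeasurableSet s →
        (P s).toReal = a * (Q s).toReal + b * (S s).toReal := by
  constructor
  · intro h s _
    rw [h, mix_apply, ENNReal.toReal_add, ENNReal.toReal_mul, ENNReal.toReal_mul,
      ENNReal.toReal_ofReal ha, ENNReal.toReal_ofReal hb]
    · exact ENNReal.mul_ne_top ENNReal.ofReal_ne_top (measure_ne_top Q s)
    · exact ENNReal.mul_ne_top ENNReal.ofReal_ne_top (measure_ne_top S s)
  · intro h
    ext s hs
    rw [mix_apply]
    have h1 : ENNReal.ofReal a * Q s ≠ ⊤ :=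
      ENNReal.mul_ne_top ENNReal.ofReal_ne_top (measure_ne_top Q s)
    have h2 : ENNReal.ofReal b * S s ≠ ⊤ :=
      ENNReal.mul_ne_top ENNReal.ofReal_ne_top (measure_ne_top S s)
    apply (ENNReal.toReal_eq_toReal_iff' (measure_ne_top P s) (ENNReal.add_ne_top.mpr ⟨h1, h2⟩)).mp
    rw [ENNReal.toReal_add h1 h2, ENNReal.toReal_mul, ENNReal.toReal_mul,
      ENNReal.toReal_ofReal ha, ENNReal.toReal_ofReal hb]
    exact h s hs

theorem stmt_2 {Ω : Type*} [MeasurableSpace Ω] (P0 P1 : Measure Ω)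
    [IsProbabilityMeasure P0] [IsProbabilityMeasure P1]
    (π0 π1 : ℝ) (hπ0 : π0 ∈ Set.Icc (0:ℝ) 1) (hπ1 : π1 ∈ Set.Icc (0:ℝ) 1)
    (hsum : π0 + π1 < 1)
    (Pt1 : Measure Ω)
    (hPt1 : Pt1 = ENNReal.ofReal (1 - π1) • P1 + ENNReal.ofReal π1 • P0) :
    nuStar P0 P1 ≤ nuStar P0 Pt1 ∧ nuStar P0 Pt1 ≤ nuStar P0 P1 / (1 - π1) := by
  obtain ⟨hπ00, hπ01⟩ := hπ0
  obtain ⟨hπ10, hπ11⟩ := hπ1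
  have hπ1lt : π1 < 1 := by linarith
  haveI hPt1prob : IsProbabilityMeasure Pt1 := by
    rw [hPt1]; exact isProb_mix P1 P0 _ _ (by linarith) hπ10 (by ring)
  -- the defining sets
  set A1 := {α : ℝ | 0 ≤ α ∧ α ≤ 1 ∧ ∃ S : Measure Ω, IsProbabilityMeasure S ∧
    P0 = ENNReal.ofReal α • P1 + ENNReal.ofReal (1 - α) • S} with hA1
  set A2 := {α : ℝ | 0 ≤ α ∧ α ≤ 1 ∧ ∃ S : Measure Ω, IsProbabilityMeasure S ∧
    P0 = ENNReal.ofReal α • Pt1 + ENNReal.ofReal (1 - α) • S} with hA2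
  have hzero1 : (0:ℝ) ∈ A1 := ⟨le_refl 0, zero_le_one, P0, inferInstance, by simp⟩
  have hzero2 : (0:ℝ) ∈ A2 := ⟨le_refl 0, zero_le_one, P0, inferInstance, by simp⟩
  have hbdd1 : BddAbove A1 := ⟨1, fun α hα => hα.2.1⟩
  have hbdd2 : BddAbove A2 := ⟨1, fun α hα => hα.2.1⟩
  have hPt1pt : ∀ s : Set Ω, MeasurableSet s →
      (Pt1 s).toReal = (1 - π1) * (P1 s).toReal + π1 * (P0 s).toReal :=
    (mix_iff Pt1 P1 P0 _ _ (by linarith) hπ10).mp hPt1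
  constructor
  · -- first inequality
    apply csSup_le_csSup hbdd2 ⟨0, hzero1⟩
    rintro α ⟨ha0, ha1, S, hS, hP⟩
    have haπ0 : 0 ≤ α * π1 := mul_nonneg ha0 hπ10
    have haπ1 : α * π1 ≤ 1 := mul_le_one₀ ha1 hπ10 hπ11
    refine ⟨ha0, ha1, ENNReal.ofReal (1 - α * π1) • S + ENNReal.ofReal (α * π1) • P1,
      isProb_mix S P1 _ _ (by linarith) haπ0 (by ring), ?_⟩
    haveI : IsProbabilityMeasure
        (ENNReal.ofReal (1 - α * π1) • S + ENNReal.ofReal (α * π1) • P1) :=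
      isProb_mix S P1 _ _ (by linarith) haπ0 (by ring)
    have hPpt := (mix_iff P0 P1 S α (1 - α) ha0 (by linarith)).mp hP
    apply (mix_iff P0 Pt1 _ α (1 - α) ha0 (by linarith)).mpr
    intro s hs
    have hS'pt : ((ENNReal.ofReal (1 - α * π1) • S + ENNReal.ofReal (α * π1) • P1) s).toReal
        = (1 - α * π1) * (S s).toReal + (α * π1) * (P1 s).toReal := by
      rw [mix_apply, ENNReal.toReal_add, ENNReal.toReal_mul, ENNReal.toReal_mul,
        ENNReal.toReal_ofReal (by linarith), ENNReal.toReal_ofReal haπ0]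
      · exact ENNReal.mul_ne_top ENNReal.ofReal_ne_top (measure_ne_top S s)
      · exact ENNReal.mul_ne_top ENNReal.ofReal_ne_top (measure_ne_top P1 s)
    rw [hS'pt, hPt1pt s hs]
    have := hPpt s hs
    nlinarith [this]
  · -- second inequality
    apply csSup_le ⟨0, hzero2⟩
    rintro α ⟨ha0, ha1, S, hS, hP⟩
    have haπ0 : 0 ≤ α * π1 := mul_nonneg ha0 hπ10
    have haπ1 : α * π1 < 1 := lt_of_le_of_lt (by nlinarith) hπ1lt
    set c := 1 - α * π1 with hc
    have hcpos : 0 < c := by simp [hc]; linarith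
    set β := α * (1 - π1) / c with hβ
    have hβ0 : 0 ≤ β := div_nonneg (by nlinarith) (le_of_lt hcpos)
    have hβ1 : β ≤ 1 := by
      rw [hβ, div_le_one hcpos]; nlinarith
    have hβA1 : β ∈ A1 := by
      refine ⟨hβ0, hβ1, S, hS, ?_⟩
      apply (mix_iff P0 P1 S β (1 - β) hβ0 (by linarith)).mpr
      intro s hs
      have hPpt := (mix_iff P0 Pt1 S α (1 - α) ha0 (by linarith)).mp hP s hs
      rw [hPt1pt s hs] at hPpt
      rw [hβ]
      field_simp
      simp only [hc]
      linear_combination hPpt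
    have hβle : β ≤ sSup A1 := le_csSup hbdd1 hβA1
    have hcle : c ≤ 1 := by rw [hc]; linarith
    have h1 : α * (1 - π1) ≤ β := by
      rw [hβ, le_div_iff₀ hcpos]
      exact mul_le_of_le_one_right (mul_nonneg ha0 (by linarith)) hcle
    rw [nuStar, ← hA1, le_div_iff₀ (by linarith : (0:ℝ) < 1 - π1)]
    linarith
end

section
/- Let P0, P1 be probability distributions on a common measurable space and let π0, π1 ∈ [0,1] satisfy π0 + π1 < 1. Let P̃0 = (1−π0)P0 + π0P1. Then ν*(P1, P0) ≤ ν*(P1, P̃0) ≤ ν*(P1, P0)/(1 − π0). -/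
open MeasureTheory

lemma mixL1 {Ω : Type*} [MeasurableSpace Ω] (P S : Measure Ω) (p b : ℝ)
    (hp : 0 ≤ p) (hp1 : p ≤ 1) (hb : 0 ≤ b) :
    ENNReal.ofReal (1 - p) • P +
      ENNReal.ofReal p • (ENNReal.ofReal b • P + ENNReal.ofReal (1 - b) • S)
    = ENNReal.ofReal (1 - p + p * b) • P + ENNReal.ofReal (p * (1 - b)) • S := by
  rw [smul_add, smul_smul, smul_smul, ← ENNReal.ofReal_mul hp, ← ENNReal.ofReal_mul hp,
    ← add_assoc, ← add_smul, ← ENNReal.ofReal_add (by linarith) (by positivity)]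

lemma mixL2 {Ω : Type*} [MeasurableSpace Ω] (P S : Measure Ω) (a b c d : ℝ)
    (ha : 0 ≤ a) (hac : 0 ≤ a * c) (hd : 0 ≤ d) :
    ENNReal.ofReal a • (ENNReal.ofReal b • P + ENNReal.ofReal c • S) +
      ENNReal.ofReal d • S
    = ENNReal.ofReal (a * b) • P + ENNReal.ofReal (a * c + d) • S := by
  rw [smul_add, smul_smul, smul_smul, ← ENNReal.ofReal_mul ha, ← ENNReal.ofReal_mul ha,
    add_assoc, ← add_smul, ← ENNReal.ofReal_add hac hd]

theorem stmt_3 {Ω : Type*} [MeasurableSpace Ω] (P0 P1 : Measure Ω)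
    [IsProbabilityMeasure P0] [IsProbabilityMeasure P1]
    (π0 π1 : ℝ) (hπ0 : π0 ∈ Set.Icc (0:ℝ) 1) (hπ1 : π1 ∈ Set.Icc (0:ℝ) 1)
    (hsum : π0 + π1 < 1)
    (Pt0 : Measure Ω)
    (hPt0 : Pt0 = ENNReal.ofReal (1 - π0) • P0 + ENNReal.ofReal π0 • P1) :
    nuStar P1 P0 ≤ nuStar P1 Pt0 ∧ nuStar P1 Pt0 ≤ nuStar P1 P0 / (1 - π0) := by
  obtain ⟨hπ00, hπ01⟩ := hπ0
  have hπ0lt : π0 < 1 := by linarith [hπ1.1]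
  have h1π0 : 0 < 1 - π0 := by linarith
  set A0 : Set ℝ := {α : ℝ | 0 ≤ α ∧ α ≤ 1 ∧ ∃ S : Measure Ω, IsProbabilityMeasure S ∧
    P1 = ENNReal.ofReal α • P0 + ENNReal.ofReal (1 - α) • S} with hA0
  set At : Set ℝ := {α : ℝ | 0 ≤ α ∧ α ≤ 1 ∧ ∃ S : Measure Ω, IsProbabilityMeasure S ∧
    P1 = ENNReal.ofReal α • Pt0 + ENNReal.ofReal (1 - α) • S} with hAt
  have hzero : ∀ Q : Measure Ω, P1 = ENNReal.ofReal (0:ℝ) • Q +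
      ENNReal.ofReal (1 - (0:ℝ)) • P1 := by
    intro Q
    simp
  have hA0ne : A0.Nonempty := ⟨0, le_refl _, zero_le_one, P1, inferInstance, hzero P0⟩
  have hAtne : At.Nonempty := ⟨0, le_refl _, zero_le_one, P1, inferInstance, hzero Pt0⟩
  have hA0bdd : BddAbove A0 := ⟨1, fun a ha => ha.2.1⟩
  have hAtbdd : BddAbove At := ⟨1, fun a ha => ha.2.1⟩
  have hnu0 : nuStar P1 P0 = sSup A0 := rfl
  have hnut : nuStar P1 Pt0 = sSup At := rfl
  constructor
  · -- nuStar P1 P0 ≤ nuStar P1 Pt0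
    rw [hnu0, hnut]
    apply csSup_le hA0ne
    intro β hβ
    obtain ⟨hβ0, hβ1, S, hS, hP1⟩ := hβ
    have hd : (0:ℝ) < 1 - π0 + π0 * β := by nlinarith
    set α := β / (1 - π0 + π0 * β) with hαdef
    have hα0 : 0 ≤ α := div_nonneg hβ0 hd.le
    have hα1 : α ≤ 1 := by
      rw [hαdef, div_le_one hd]; nlinarith
    have hβα : β ≤ α := by
      rw [hαdef, le_div_iff₀ hd]
      nlinarith [mul_nonneg hβ0 (mul_nonneg hπ00 (sub_nonneg.mpr hβ1))]
    have e1 : α * (1 - π0 + π0 * β) = β := by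
      rw [hαdef]; field_simp
    have e2 : α * (π0 * (1 - β)) + (1 - α) = 1 - β := by
      rw [hαdef]; field_simp; ring
    have hmem : α ∈ At := by
      refine ⟨hα0, hα1, S, hS, ?_⟩
      rw [hPt0, hP1, mixL1 P0 S π0 β hπ00 hπ01 hβ0,
        mixL2 P0 S α (1 - π0 + π0 * β) (π0 * (1 - β)) (1 - α) hα0
          (by nlinarith) (by linarith), e1, e2]
    exact le_trans hβα (le_csSup hAtbdd hmem)
  · -- nuStar P1 Pt0 ≤ nuStar P1 P0 / (1 - π0)
    rw [hnu0, hnut]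
    apply csSup_le hAtne
    intro α hα
    obtain ⟨hα0, hα1, S, hS, hP1⟩ := hα
    have hden : (0:ℝ) < 1 - α * π0 := by nlinarith
    set β := α * (1 - π0) / (1 - α * π0) with hβdef
    have hβ0 : 0 ≤ β := by
      apply div_nonneg (by nlinarith) hden.le
    have hβ1 : β ≤ 1 := by
      rw [hβdef, div_le_one hden]; nlinarith
    have hmem : β ∈ A0 := by
      refine ⟨hβ0, hβ1, S, hS, ?_⟩
      ext s hs
      have hSs : S s ≠ ⊤ := measure_ne_top _ _
      have hP0s : P0 s ≠ ⊤ := measure_ne_top _ _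
      have hP1s : P1 s ≠ ⊤ := measure_ne_top _ _
      have hPt0s : Pt0 s = ENNReal.ofReal (1 - π0) * P0 s + ENNReal.ofReal π0 * P1 s := by
        rw [hPt0]; simp [Measure.add_apply, Measure.smul_apply, smul_eq_mul]
      have happ : P1 s = ENNReal.ofReal α *
          (ENNReal.ofReal (1 - π0) * P0 s + ENNReal.ofReal π0 * P1 s) +
          ENNReal.ofReal (1 - α) * S s := by
        rw [← hPt0s]
        have := congrArg (fun μ : Measure Ω => μ s) hP1
        simpa [Measure.add_apply, Measure.smul_apply, smul_eq_mul] using this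
      have hreal : (P1 s).toReal = α * ((1 - π0) * (P0 s).toReal + π0 * (P1 s).toReal)
          + (1 - α) * (S s).toReal := by
        have := congrArg ENNReal.toReal happ
        rw [ENNReal.toReal_add, ENNReal.toReal_mul, ENNReal.toReal_mul,
          ENNReal.toReal_add, ENNReal.toReal_mul, ENNReal.toReal_mul,
          ENNReal.toReal_ofReal hα0, ENNReal.toReal_ofReal (by linarith : (0:ℝ) ≤ 1 - π0),
          ENNReal.toReal_ofReal hπ00, ENNReal.toReal_ofReal (by linarith : (0:ℝ) ≤ 1 - α)]
          at this
        · exact this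
        · exact ENNReal.mul_ne_top ENNReal.ofReal_ne_top hP0s
        · exact ENNReal.mul_ne_top ENNReal.ofReal_ne_top hP1s
        · exact ENNReal.mul_ne_top ENNReal.ofReal_ne_top
            (ENNReal.add_ne_top.mpr ⟨ENNReal.mul_ne_top ENNReal.ofReal_ne_top hP0s,
              ENNReal.mul_ne_top ENNReal.ofReal_ne_top hP1s⟩)
        · exact ENNReal.mul_ne_top ENNReal.ofReal_ne_top hSs
      have hrhsfin : ENNReal.ofReal β * P0 s + ENNReal.ofReal (1 - β) * S s ≠ ⊤ := by
        exact ENNReal.add_ne_top.mpr ⟨ENNReal.mul_ne_top ENNReal.ofReal_ne_top hP0s,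
          ENNReal.mul_ne_top ENNReal.ofReal_ne_top hSs⟩
      have goal' : (P1 s).toReal =
          (ENNReal.ofReal β * P0 s + ENNReal.ofReal (1 - β) * S s).toReal := by
        rw [ENNReal.toReal_add (ENNReal.mul_ne_top ENNReal.ofReal_ne_top hP0s)
            (ENNReal.mul_ne_top ENNReal.ofReal_ne_top hSs),
          ENNReal.toReal_mul, ENNReal.toReal_mul, ENNReal.toReal_ofReal hβ0,
          ENNReal.toReal_ofReal (by linarith : (0:ℝ) ≤ 1 - β), hβdef]
        field_simp
        nlinarith [hreal]
      have := (ENNReal.toReal_eq_toReal_iff' hP1s hrhsfin).mp goal'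
      simpa [Measure.add_apply, Measure.smul_apply, smul_eq_mul] using this
    have hβsup : β ≤ sSup A0 := le_csSup hA0bdd hmem
    have hstep : α ≤ β / (1 - π0) := by
      rw [hβdef, le_div_iff₀ h1π0, le_div_iff₀ hden]
      nlinarith [mul_nonneg (mul_nonneg hα0 h1π0.le) (mul_nonneg hα0 hπ00)]
    calc α ≤ β / (1 - π0) := hstep
      _ ≤ sSup A0 / (1 - π0) := by gcongr
end

section
/- Let P and Q be probability distributions on a common measurable space with P ≠ Q. Then ν*(P,Q) < 1. Consequently, if P̃0 ≠ P̃1 are probability distributions, then ν*(P̃0, P̃1)·ν*(P̃1, P̃0) < 1. -/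
open MeasureTheory

lemma nuStar_set_subset {Ω : Type*} [MeasurableSpace Ω] (P Q : Measure Ω) :
    {α : ℝ | 0 ≤ α ∧ α ≤ 1 ∧ ∃ S : Measure Ω, IsProbabilityMeasure S ∧
      P = ENNReal.ofReal α • Q + ENNReal.ofReal (1 - α) • S} ⊆ Set.Icc 0 1 :=
  fun _ h => ⟨h.1, h.2.1⟩

lemma zero_mem_nuStar_set {Ω : Type*} [MeasurableSpace Ω] (P Q : Measure Ω)
    [IsProbabilityMeasure P] :
    (0 : ℝ) ∈ {α : ℝ | 0 ≤ α ∧ α ≤ 1 ∧ ∃ S : Measure Ω, IsProbabilityMeasure S ∧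
      P = ENNReal.ofReal α • Q + ENNReal.ofReal (1 - α) • S} := by
  refine ⟨le_refl 0, zero_le_one, P, inferInstance, ?_⟩
  simp

lemma nuStar_nonneg {Ω : Type*} [MeasurableSpace Ω] (P Q : Measure Ω)
    [IsProbabilityMeasure P] : 0 ≤ nuStar P Q :=
  le_csSup ⟨1, fun _ h => (nuStar_set_subset P Q h).2⟩ (zero_mem_nuStar_set P Q)

lemma nuStar_le_one {Ω : Type*} [MeasurableSpace Ω] (P Q : Measure Ω)
    [IsProbabilityMeasure P] : nuStar P Q ≤ 1 :=
  csSup_le ⟨0, zero_mem_nuStar_set P Q⟩ (fun _ h => (nuStar_set_subset P Q h).2)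

lemma nuStar_lt_one {Ω : Type*} [MeasurableSpace Ω] (P Q : Measure Ω)
    [IsProbabilityMeasure P] [IsProbabilityMeasure Q] (hPQ : P ≠ Q) :
    nuStar P Q < 1 := by
  rcases lt_or_eq_of_le (nuStar_le_one P Q) with h | h
  · exact h
  exfalso
  -- If nuStar = 1, then Q ≤ P, hence P = Q.
  have hQP : Q ≤ P := by
    intro A
    refine ENNReal.le_of_forall_pos_le_add (fun ε hε hPA => ?_)
    -- find α in the set with α > 1 - ε
    have hne : Set.Nonempty {α : ℝ | 0 ≤ α ∧ α ≤ 1 ∧ ∃ S : Measure Ω, IsProbabilityMeasure S ∧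
        P = ENNReal.ofReal α • Q + ENNReal.ofReal (1 - α) • S} := ⟨0, zero_mem_nuStar_set P Q⟩
    have hlt : (1 : ℝ) - ε < nuStar P Q := by
      rw [h]; have := NNReal.coe_pos.mpr hε; linarith
    obtain ⟨α, hαmem, hαgt⟩ := exists_lt_of_lt_csSup hne hlt
    obtain ⟨hα0, hα1, S, hS, hPeq⟩ := hαmem
    have hPAge : ENNReal.ofReal α * Q A ≤ P A := by
      conv_rhs => rw [hPeq]
      simp only [Measure.add_apply, Measure.smul_apply, smul_eq_mul]
      exact le_add_right le_rfl
    have h1 : Q A ≤ ENNReal.ofReal α * Q A + ENNReal.ofReal (1 - α) := by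
      have hQA1 : Q A ≤ 1 := prob_le_one
      calc Q A = (ENNReal.ofReal α + ENNReal.ofReal (1 - α)) * Q A := by
            rw [← ENNReal.ofReal_add hα0 (by linarith), add_sub_cancel,
              ENNReal.ofReal_one, one_mul]
        _ = ENNReal.ofReal α * Q A + ENNReal.ofReal (1 - α) * Q A := by ring
        _ ≤ ENNReal.ofReal α * Q A + ENNReal.ofReal (1 - α) * 1 :=
            add_le_add_right (mul_le_mul_right hQA1 _) _
        _ = ENNReal.ofReal α * Q A + ENNReal.ofReal (1 - α) := by rw [mul_one]
    have h2 : ENNReal.ofReal (1 - α) ≤ (ε : ENNReal) := by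
      rw [← ENNReal.ofReal_coe_nnreal]
      exact ENNReal.ofReal_le_ofReal (by linarith)
    calc Q A ≤ ENNReal.ofReal α * Q A + ENNReal.ofReal (1 - α) := h1
      _ ≤ P A + ε := add_le_add hPAge h2
  -- Now Q ≤ P with equal total mass implies Q = P
  apply hPQ
  ext A hA
  by_contra hne
  have hlt : Q A < P A := lt_of_le_of_ne (hQP A) (Ne.symm hne)
  have hcompl : Q Aᶜ ≤ P Aᶜ := hQP Aᶜ
  have hQu : Q A + Q Aᶜ = 1 := by
    rw [measure_add_measure_compl hA]; exact measure_univ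
  have hPu : P A + P Aᶜ = 1 := by
    rw [measure_add_measure_compl hA]; exact measure_univ
  have : Q A + Q Aᶜ < P A + P Aᶜ :=
    ENNReal.add_lt_add_of_lt_of_le (measure_ne_top Q Aᶜ) hlt hcompl
  rw [hQu, hPu] at this
  exact lt_irrefl _ this

theorem stmt_9 {Ω : Type*} [MeasurableSpace Ω] (P Q : Measure Ω)
    [IsProbabilityMeasure P] [IsProbabilityMeasure Q] (hPQ : P ≠ Q) :
    nuStar P Q < 1 ∧
      ∀ (Pt0 Pt1 : Measure Ω), IsProbabilityMeasure Pt0 → IsProbabilityMeasure Pt1 →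
        Pt0 ≠ Pt1 → nuStar Pt0 Pt1 * nuStar Pt1 Pt0 < 1 := by
  refine ⟨nuStar_lt_one P Q hPQ, fun Pt0 Pt1 h0 h1 hne => ?_⟩
  have ha : nuStar Pt0 Pt1 < 1 := nuStar_lt_one Pt0 Pt1 hne
  have ha0 : 0 ≤ nuStar Pt0 Pt1 := nuStar_nonneg Pt0 Pt1
  have hb0 : 0 ≤ nuStar Pt1 Pt0 := nuStar_nonneg Pt1 Pt0
  have hb1 : nuStar Pt1 Pt0 ≤ 1 := nuStar_le_one Pt1 Pt0
  nlinarith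
end

section
/- Fix r̃0, r̃1 ∈ [0,1] with r̃0 + r̃1 ≤ 1, costs c01, c10 ≥ 0, and prior q0 ∈ [0,1]. Define, for π = (π0, π1) with π0, π1 ≥ 0 and π0 + π1 < 1: R0(π) = ((1−π1)r̃0 − π0(1−r̃1))/(1−π0−π1), R1(π) = ((1−π0)r̃1 − π1(1−r̃0))/(1−π0−π1), and R_B(π) = c01·q0·R0(π) + c10·(1−q0)·R1(π). Then R_B is nonincreasing in π0 and nonincreasing in π1 on this domain; i.e., if π = (π0,π1) and π' = (π0',π1') lie in the domain with π0 ≤ π0' and π1 ≤ π1', then R_B(π') ≤ R_B(π). -/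
theorem stmt_17 (r0 r1 : ℝ) (hr0 : r0 ∈ Set.Icc (0:ℝ) 1) (hr1 : r1 ∈ Set.Icc (0:ℝ) 1)
    (hsum : r0 + r1 ≤ 1) (c01 c10 : ℝ) (hc01 : 0 ≤ c01) (hc10 : 0 ≤ c10)
    (q0 : ℝ) (hq0 : q0 ∈ Set.Icc (0:ℝ) 1)
    (RB : ℝ × ℝ → ℝ)
    (hRB : ∀ π : ℝ × ℝ, RB π =
      c01 * q0 * (((1 - π.2) * r0 - π.1 * (1 - r1)) / (1 - π.1 - π.2))
        + c10 * (1 - q0) * (((1 - π.1) * r1 - π.2 * (1 - r0)) / (1 - π.1 - π.2)))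
    (π π' : ℝ × ℝ)
    (hπ : 0 ≤ π.1 ∧ 0 ≤ π.2 ∧ π.1 + π.2 < 1)
    (hπ' : 0 ≤ π'.1 ∧ 0 ≤ π'.2 ∧ π'.1 + π'.2 < 1)
    (h1 : π.1 ≤ π'.1) (h2 : π.2 ≤ π'.2) :
    RB π' ≤ RB π := by
  obtain ⟨ha1, ha2, ha3⟩ := hπ
  obtain ⟨hb1, hb2, hb3⟩ := hπ'
  have hd : (0:ℝ) < 1 - π.1 - π.2 := by linarith
  have hd' : (0:ℝ) < 1 - π'.1 - π'.2 := by linarith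
  set a := c01 * q0 with ha
  set b := c10 * (1 - q0) with hb
  have haa : 0 ≤ a := mul_nonneg hc01 hq0.1
  have hbb : 0 ≤ b := mul_nonneg hc10 (by linarith [hq0.2])
  have key : ∀ p : ℝ × ℝ, 0 < 1 - p.1 - p.2 →
      RB p = a * r0 + b * r1 + (r0 + r1 - 1) * ((a * p.1 + b * p.2) / (1 - p.1 - p.2)) := by
    intro p hp
    rw [hRB p]
    field_simp
    ring
  rw [key π hd, key π' hd']
  have hfrac : (a * π.1 + b * π.2) / (1 - π.1 - π.2)
      ≤ (a * π'.1 + b * π'.2) / (1 - π'.1 - π'.2) := by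
    rw [div_le_div_iff₀ hd hd']
    have t1 : π.1 * (1 - π'.2) ≤ π'.1 * (1 - π.2) :=
      mul_le_mul h1 (by linarith) (by linarith) hb1
    have t2 : π.2 * (1 - π'.1) ≤ π'.2 * (1 - π.1) :=
      mul_le_mul h2 (by linarith) (by linarith) hb2
    nlinarith [mul_le_mul_of_nonneg_left t1 haa, mul_le_mul_of_nonneg_left t2 hbb]
  nlinarith [mul_nonneg (sub_nonneg.2 hfrac) (sub_nonneg.2 hsum)]
end
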